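/- For any vertex v of a graph G, the skew rank-spread r^-_v(G) = mr^-(G) - mr^-(G - v) is either 0 or 2. -/

import Mathlib

/-!
Deleting `v` from a skew representation `A` of `G` leaves a principal submatrix representing
`G - v`, so `mr⁻(G - v) ≤ mr⁻(G)`. Conversely, any skew representation of `G - v` extends to one
of `G` by a row and a column, which raises the rank by at most two. Finally, a real
skew-symmetric matrix has even rank: on its range it acts as an injective skew-adjoint operator,
whose matrix in an orthonormal basis is skew-symmetric and nonsingular, and such a matrix has
even size. So the spread lies in `{0, 1, 2}` and is even.
-/

open Matrix SimpleGraph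

attribute [local instance] Classical.propDecidable

/-- The set of real skew-symmetric matrices whose off-diagonal zero-nonzero
pattern is described by the graph `G`. -/
def IsSkewRep {V : Type*} [Fintype V] (G : SimpleGraph V) (A : Matrix V V ℝ) : Prop :=
  Aᵀ = -A ∧ ∀ i j, i ≠ j → (A i j ≠ 0 ↔ G.Adj i j)

/-- The minimum skew rank of a simple graph. -/
noncomputable def minSkewRank {V : Type*} [Fintype V] (G : SimpleGraph V) : ℕ :=
  sInf {r | ∃ A : Matrix V V ℝ, IsSkewRep G A ∧ A.rank = r}

/-- The maximum skew rank of a simple graph. -/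
noncomputable def maxSkewRank {V : Type*} [Fintype V] (G : SimpleGraph V) : ℕ :=
  sSup {r | ∃ A : Matrix V V ℝ, IsSkewRep G A ∧ A.rank = r}

/-- The matching number of a simple graph. -/
noncomputable def matchNum {V : Type*} [Fintype V] (G : SimpleGraph V) : ℕ :=
  sSup {n | ∃ M : G.Subgraph, M.IsMatching ∧ M.edgeSet.ncard = n}

theorem Matrix.det_eq_zero_of_transpose_eq_neg {n R : Type*} [Fintype n] [DecidableEq n]
    [CommRing R] [IsAddTorsionFree R] {M : Matrix n n R} (hM : Mᵀ = -M)
    (hn : Odd (Fintype.card n)) : M.det = 0 :=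
  self_eq_neg.mp <| calc
    M.det = Mᵀ.det := M.det_transpose.symm
    _ = -M.det := by rw [hM, det_neg, hn.neg_one_pow, neg_one_mul]

theorem LinearMap.even_finrank_of_injective_of_skew {E : Type*} [NormedAddCommGroup E]
    [InnerProductSpace ℝ E] [FiniteDimensional ℝ E] {f : E →ₗ[ℝ] E}
    (hskew : ∀ x y, inner ℝ (f x) y = -inner ℝ x (f y)) (hf : Function.Injective f) :
    Even (Module.finrank ℝ E) := by
  by_contra hodd
  let b := (stdOrthonormalBasis ℝ E).toBasis
  have hM : (LinearMap.toMatrix b b f)ᵀ = -LinearMap.toMatrix b b f := by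
    ext i j
    simp only [transpose_apply, Matrix.neg_apply, LinearMap.toMatrix_apply, b,
      OrthonormalBasis.coe_toBasis_repr_apply, OrthonormalBasis.coe_toBasis,
      OrthonormalBasis.repr_apply_apply]
    rw [real_inner_comm, hskew, real_inner_comm]
  have hdet := Matrix.det_eq_zero_of_transpose_eq_neg hM
    (by simpa using Nat.not_even_iff_odd.mp hodd)
  rw [LinearMap.det_toMatrix, LinearMap.det_eq_zero_iff_ker_ne_bot] at hdet
  exact hdet (LinearMap.ker_eq_bot.mpr hf)

theorem LinearMap.even_finrank_range_of_skew {E : Type*} [NormedAddCommGroup E]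
    [InnerProductSpace ℝ E] [FiniteDimensional ℝ E] {f : E →ₗ[ℝ] E}
    (hskew : ∀ x y, inner ℝ (f x) y = -inner ℝ x (f y)) :
    Even (Module.finrank ℝ (LinearMap.range f)) := by
  let g := f.restrict (p := LinearMap.range f) fun x _ => LinearMap.mem_range_self f x
  have hg : ∀ x, (g x : E) = f x := fun _ => rfl
  have hg_skew : ∀ x y, inner ℝ (g x) y = -inner ℝ x (g y) := fun x y => by
    simp only [Submodule.coe_inner, hg, hskew]
  have hg_inj : Function.Injective g := by
    refine (injective_iff_map_eq_zero g).mpr fun x hx => ?_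
    obtain ⟨z, hz⟩ := x.2
    have hfx : f x = 0 := by rw [← hg, hx, Submodule.coe_zero]
    have hxx : inner ℝ (x : E) x = 0 := by
      rw [← hz, hskew, hz, hfx, inner_zero_right, neg_zero]
    exact Subtype.ext (inner_self_eq_zero.mp hxx)
  exact g.even_finrank_of_injective_of_skew hg_skew hg_inj

theorem Matrix.even_rank_of_transpose_eq_neg {n : Type*} [Fintype n] [DecidableEq n]
    {A : Matrix n n ℝ} (hA : Aᵀ = -A) : Even A.rank := by
  have hadj : LinearMap.adjoint (toEuclideanLin A) = -toEuclideanLin A := by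
    rw [← toEuclideanLin_conjTranspose_eq_adjoint, conjTranspose_eq_transpose_of_trivial, hA,
      map_neg]
  rw [A.rank_eq_finrank_range_toLin (PiLp.basisFun 2 ℝ n) (PiLp.basisFun 2 ℝ n),
    ← toLpLin_eq_toLin]
  refine LinearMap.even_finrank_range_of_skew fun x y => ?_
  rw [← LinearMap.adjoint_inner_right, hadj, LinearMap.neg_apply, inner_neg_right]

theorem Matrix.rank_add_le {m n K : Type*} [Fintype n] [Field K] (A B : Matrix m n K) :
    (A + B).rank ≤ A.rank + B.rank := by
  rw [Matrix.rank, Matrix.rank, Matrix.rank, Matrix.mulVecLin_add]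
  have hle : LinearMap.range (A.mulVecLin + B.mulVecLin) ≤
      LinearMap.range A.mulVecLin ⊔ LinearMap.range B.mulVecLin := by
    rintro x ⟨y, rfl⟩
    exact Submodule.mem_sup.2 ⟨_, ⟨y, rfl⟩, _, ⟨y, rfl⟩, rfl⟩
  exact (Submodule.finrank_mono hle).trans (Submodule.finrank_add_le_finrank_add_finrank _ _)

theorem Matrix.rank_le_rank_submatrix_row_add_one {m n K : Type*} [Fintype m] [DecidableEq m]
    [Fintype n] [Field K] (A : Matrix m n K) (a : m) :
    A.rank ≤ (A.submatrix ((↑) : {i | i ≠ a} → m) id).rank + 1 := by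
  -- without the ascriptions `*` elaborates to the `CStarMatrix` product
  have hsplit : A = ((1 : Matrix m m K).submatrix id (↑) : Matrix m {i | i ≠ a} K) *
      (A.submatrix (↑) id : Matrix {i | i ≠ a} n K) + vecMulVec (Pi.single a 1) (A a) := by
    ext i j
    simp only [add_apply, mul_apply, submatrix_apply, id_eq, one_apply, ite_mul, one_mul,
      zero_mul, vecMulVec_apply, Pi.single_apply]
    by_cases hi : i = a
    · subst hi
      rw [Fintype.sum_eq_zero _ fun s => if_neg (Ne.symm s.2)]
      simp
    · rw [Fintype.sum_eq_single ⟨i, hi⟩ fun s hs => if_neg fun h => hs (Subtype.ext h.symm)]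
      simp [hi]
  conv_lhs => rw [hsplit]
  exact (rank_add_le _ _).trans (add_le_add (rank_mul_le_right _ _) (rank_vecMulVec_le _ _))

theorem Matrix.rank_le_rank_submatrix_add_two {m K : Type*} [Fintype m] [DecidableEq m]
    [Field K] (A : Matrix m m K) (a : m) :
    A.rank ≤ (A.submatrix ((↑) : {i | i ≠ a} → m) ((↑) : {i | i ≠ a} → m)).rank + 2 := by
  have hcols := (A.submatrix ((↑) : {i | i ≠ a} → m) id)ᵀ.rank_le_rank_submatrix_row_add_one a
  rw [rank_transpose, transpose_submatrix, submatrix_submatrix, Function.comp_id,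
    Function.id_comp, ← transpose_submatrix, rank_transpose] at hcols
  exact (A.rank_le_rank_submatrix_row_add_one a).trans (by omega)

section SkewRep

variable {V : Type*} [Fintype V]

theorem exists_isSkewRep (G : SimpleGraph V) : ∃ A : Matrix V V ℝ, IsSkewRep G A := by
  let e := Fintype.equivFin V
  refine ⟨Matrix.of fun i j => if G.Adj i j then ((e j : ℝ) - e i) else 0, ?_,
    fun i j hij => ?_⟩
  · ext i j
    simp only [transpose_apply, Matrix.neg_apply, of_apply, G.adj_comm j i]
    split_ifs <;> ring
  · by_cases h : G.Adj i j <;> simp [h, sub_eq_zero, Fin.val_inj, hij.symm]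

namespace IsSkewRep

variable {G : SimpleGraph V}

theorem induce {A : Matrix V V ℝ} (hA : IsSkewRep G A) (s : Set V) [Fintype s] :
    IsSkewRep (G.induce s) (A.submatrix (↑) (↑)) :=
  ⟨by rw [transpose_submatrix, hA.1]; rfl,
    fun i j hij => hA.2 i j (Subtype.coe_injective.ne hij)⟩

theorem exists_extend {s : Set V} [Fintype s] {B : Matrix s s ℝ}
    (hB : IsSkewRep (G.induce s) B) :
    ∃ A : Matrix V V ℝ, IsSkewRep G A ∧ A.submatrix (↑) (↑) = B := by
  obtain ⟨C, hC⟩ := exists_isSkewRep G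
  refine ⟨Matrix.of fun i j => if h : i ∈ s ∧ j ∈ s then B ⟨i, h.1⟩ ⟨j, h.2⟩ else C i j,
    ⟨?_, ?_⟩, ?_⟩
  · ext i j
    simp only [transpose_apply, Matrix.neg_apply, of_apply, and_comm (a := j ∈ s)]
    split_ifs with h
    · exact congrFun (congrFun hB.1 ⟨i, h.1⟩) ⟨j, h.2⟩
    · exact congrFun (congrFun hC.1 i) j
  · intro i j hij
    simp only [of_apply]
    split_ifs with h
    · exact hB.2 ⟨i, h.1⟩ ⟨j, h.2⟩ (by simpa using hij)
    · exact hC.2 i j hij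
  · ext i j
    simp [i.2, j.2]

end IsSkewRep

theorem minSkewRank_spec (G : SimpleGraph V) :
    ∃ A : Matrix V V ℝ, IsSkewRep G A ∧ A.rank = minSkewRank G := by
  obtain ⟨A, hA⟩ := exists_isSkewRep G
  exact Nat.sInf_mem (s := {r | ∃ A : Matrix V V ℝ, IsSkewRep G A ∧ A.rank = r})
    ⟨A.rank, A, hA, rfl⟩

theorem minSkewRank_le_rank {G : SimpleGraph V} {A : Matrix V V ℝ} (hA : IsSkewRep G A) :
    minSkewRank G ≤ A.rank :=
  Nat.sInf_le ⟨A, hA, rfl⟩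

theorem even_minSkewRank (G : SimpleGraph V) : Even (minSkewRank G) := by
  obtain ⟨A, hA, hrank⟩ := minSkewRank_spec G
  exact hrank ▸ Matrix.even_rank_of_transpose_eq_neg hA.1

theorem minSkewRank_induce_le (G : SimpleGraph V) (s : Set V) [Fintype s] :
    minSkewRank (G.induce s) ≤ minSkewRank G := by
  obtain ⟨A, hA, hrank⟩ := minSkewRank_spec G
  exact (minSkewRank_le_rank (hA.induce s)).trans (hrank ▸ rank_submatrix_le _ _ _)

theorem minSkewRank_le_induce_add_two (G : SimpleGraph V) (v : V) :
    minSkewRank G ≤ minSkewRank (G.induce {u | u ≠ v}) + 2 := by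
  obtain ⟨B, hB, hrank⟩ := minSkewRank_spec (G.induce {u | u ≠ v})
  obtain ⟨A, hA, rfl⟩ := hB.exists_extend
  rw [← hrank]
  exact (minSkewRank_le_rank hA).trans (A.rank_le_rank_submatrix_add_two v)

end SkewRep

/-- The skew rank-spread `r⁻_v(G) = mr⁻(G) - mr⁻(G - v)` at any vertex is
either `0` or `2`. -/
theorem skew_rank_spread_zero_or_two {V : Type*} [Fintype V] (G : SimpleGraph V) (v : V) :
    minSkewRank G = minSkewRank (G.induce {u | u ≠ v}) ∨
      minSkewRank G = minSkewRank (G.induce {u | u ≠ v}) + 2 := by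
  have hle := minSkewRank_induce_le G {u | u ≠ v}
  have hle_add := minSkewRank_le_induce_add_two G v
  obtain ⟨k, hk⟩ := even_minSkewRank G
  obtain ⟨l, hl⟩ := even_minSkewRank (G.induce {u | u ≠ v})
  omega
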